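/- arXiv:2401.00623 — 4 statements merged into one kernel-verified Lean document; each statement's English description precedes it below -/
import Mathlib

section
/- Let f: ℝ → ℝ be continuous with f ≡ 0 on (−∞,0] and primitive F(s) = ∫₀ˢ f(r) dr, and suppose s ↦ (f(s)s − 2F(s))/s⁴ is strictly increasing on (0,∞). Then for every t > 0 and every s ∈ ℝ, ((1 − t²)/2)·(f(s)s − 2F(s)) + t^{−2}F(ts) − F(s) ≥ 0. -/
open MeasureTheory Real Filter Set
open scoped RealInnerProductSpace

noncomputable section

abbrev R2 := EuclideanSpace ℝ (Fin 2)

/-- Membership in `H¹(ℝ²)`: `u ∈ L²` and its gradient lies in `L²`. -/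
def MemH1 (u : R2 → ℝ) : Prop :=
  MemLp u 2 (volume : Measure R2) ∧
    MemLp (fun x => ‖gradient u x‖) 2 (volume : Measure R2)

/-- The Chern–Simons gauge field `A₁[u]`. -/
def A1 (u : R2 → ℝ) (x : R2) : ℝ :=
  -(1 / (4 * π)) * ∫ y : R2, (x 1 - y 1) * (u y) ^ 2 / ‖x - y‖ ^ 2

/-- The Chern–Simons gauge field `A₂[u]`. -/
def A2 (u : R2 → ℝ) (x : R2) : ℝ :=
  (1 / (4 * π)) * ∫ y : R2, (x 0 - y 0) * (u y) ^ 2 / ‖x - y‖ ^ 2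

/-- The Chern–Simons gauge field `A₀[u]`. -/
def A0 (u : R2 → ℝ) (x : R2) : ℝ :=
  (1 / (2 * π)) *
    ∫ y : R2, ((x 0 - y 0) * A2 u y - (x 1 - y 1) * A1 u y) * (u y) ^ 2 / ‖x - y‖ ^ 2

/-- Primitive `F(s) = ∫₀ˢ f(t) dt`. -/
def Fprim (f : ℝ → ℝ) (s : ℝ) : ℝ := ∫ t in (0:ℝ)..s, f t

/-- The energy functional `E`. -/
def Efun (f : ℝ → ℝ) (u : R2 → ℝ) : ℝ :=
  (1 / 2) * ∫ x : R2, (‖gradient u x‖ ^ 2 + (A1 u x ^ 2 + A2 u x ^ 2) * (u x) ^ 2)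
    - ∫ x : R2, Fprim f (u x)

/-- The Pohožaev-type functional `J`. -/
def Jfun (f : ℝ → ℝ) (u : R2 → ℝ) : ℝ :=
  (∫ x : R2, (‖gradient u x‖ ^ 2 + (A1 u x ^ 2 + A2 u x ^ 2) * (u x) ^ 2))
    - ∫ x : R2, (f (u x) * u x - 2 * Fprim f (u x))

/-- The sphere `S(a)` in `H¹(ℝ²)`. -/
def Sset (a : ℝ) : Set (R2 → ℝ) :=
  {u | MemH1 u ∧ (∫ x : R2, (u x) ^ 2) = a ^ 2}

/-- The constraint manifold `M(a) = {u ∈ S(a) : J(u) = 0}`. -/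
def Mconstraint (f : ℝ → ℝ) (a : ℝ) : Set (R2 → ℝ) :=
  {u | u ∈ Sset a ∧ Jfun f u = 0}

/-- The ground state energy `m(a) = inf_{u ∈ M(a)} E(u)`. -/
def mval (f : ℝ → ℝ) (a : ℝ) : ℝ := sInf (Efun f '' Mconstraint f a)

/-- `(u, λ)` is a weak solution of the Chern–Simons–Schrödinger system with nonlinearity `f`. -/
def WeakSolution (f : ℝ → ℝ) (u : R2 → ℝ) (lam : ℝ) : Prop :=
  ∀ ψ : R2 → ℝ, MemH1 ψ →
    (∫ x : R2, (⟪gradient u x, gradient ψ x⟫ + lam * u x * ψ x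
      + (A0 u x + A1 u x ^ 2 + A2 u x ^ 2) * u x * ψ x))
    = ∫ x : R2, f (u x) * ψ x

/-- Subcritical exponential growth at infinity. -/
def Subcritical (f : ℝ → ℝ) : Prop :=
  ∀ α > (0:ℝ), Tendsto (fun t => |f t| * Real.exp (-α * t ^ 2)) atTop (nhds 0)

/-- Critical exponential growth at infinity with exponent `α₀`. -/
def CriticalGrowth (f : ℝ → ℝ) (α₀ : ℝ) : Prop :=
  (∀ α > α₀, Tendsto (fun t => |f t| * Real.exp (-α * t ^ 2)) atTop (nhds 0)) ∧
  (∀ α < α₀, Tendsto (fun t => |f t| * Real.exp (-α * t ^ 2)) atTop atTop)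

/-- Condition `(f₁)`. -/
def Cond_f1 (f : ℝ → ℝ) : Prop :=
  ContDiff ℝ 1 f ∧ (∀ s ≤ 0, f s = 0) ∧
  ∃ χ : ℝ, 4 ≤ χ ∧
    Tendsto (fun s => f s / Real.rpow s (χ - 1)) (nhdsWithin 0 (Ioi 0)) (nhds 0)

/-- Condition `(f₂)`. -/
def Cond_f2 (f : ℝ → ℝ) : Prop :=
  ∃ θ : ℝ, 4 < θ ∧ ∀ s > (0:ℝ), 0 < θ * Fprim f s ∧ θ * Fprim f s ≤ f s * s

/-- Condition `(f₃)`. -/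
def Cond_f3 (f : ℝ → ℝ) : Prop :=
  StrictMonoOn (fun s => (f s * s - 2 * Fprim f s) / s ^ 4) (Ioi 0)

/-- Condition `(f₄)`. -/
def Cond_f4 (f : ℝ → ℝ) : Prop :=
  ∃ s₀ > (0:ℝ), ∃ M₀ > (0:ℝ), ∃ ϑ ∈ Ioc (0:ℝ) 1,
    ∀ s ≥ s₀, 0 < Real.rpow s ϑ * Fprim f s ∧ Real.rpow s ϑ * Fprim f s ≤ M₀ * f s

/-- Condition `(f₅)`. -/
def Cond_f5 (f : ℝ → ℝ) (α₀ : ℝ) : Prop :=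
  ∃ β₀ > (0:ℝ), β₀ ≤ Filter.liminf (fun s => Fprim f s * Real.exp (-α₀ * s ^ 2)) atTop

/-- Dilation `u_t(x) = t u(tx)`. -/
def scaleFun (t : ℝ) (u : R2 → ℝ) : R2 → ℝ := fun x => t * u (t • x)

/-- Truncated nonlinearity `f^{R,δ̄}`. -/
def fR (h : ℝ → ℝ) (R α₀ τ δ : ℝ) (t : ℝ) : ℝ :=
  if t ≤ 0 then 0
  else if t ≤ R then h t * Real.exp (α₀ * Real.rpow t τ)
  else h t * Real.exp (α₀ * Real.rpow R (τ - δ) * Real.rpow t δ)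

/-- Moser-type functions. -/
def moser (n : ℕ) (ρ R : ℝ) (x : R2) : ℝ :=
  (1 / Real.sqrt (2 * π)) *
    (if ‖x‖ ≤ ρ / n then Real.sqrt (Real.log n)
     else if ‖x‖ ≤ ρ / 2 then Real.log (ρ / ‖x‖) / Real.sqrt (Real.log n)
     else if ‖x‖ ≤ R then 2 * (R - ‖x‖) * Real.log 2 / ((2 * R - ρ) * Real.sqrt (Real.log n))
     else 0)

end

/-- the elementary scaling inequality coming from `(f₃)`. -/
theorem statement11 (f : ℝ → ℝ) (hcont : Continuous f)
    (hzero : ∀ s ≤ (0:ℝ), f s = 0)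
    (hmono : StrictMonoOn (fun s => (f s * s - 2 * Fprim f s) / s ^ 4) (Ioi 0)) :
    ∀ t > (0:ℝ), ∀ s : ℝ,
      0 ≤ ((1 - t ^ 2) / 2) * (f s * s - 2 * Fprim f s)
            + Fprim f (t * s) / t ^ 2 - Fprim f s := by
  have hF : ∀ x : ℝ, HasDerivAt (Fprim f) (f x) x := fun x =>
    (hcont.integral_hasStrictDerivAt 0 x).hasDerivAt
  have hFzero : ∀ x ≤ (0:ℝ), Fprim f x = 0 := by
    intro x hx
    have : EqOn f 0 (uIcc 0 x) := by
      intro y hy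
      rw [uIcc_of_ge hx] at hy
      exact hzero y hy.2
    have h := intervalIntegral.integral_congr (μ := volume) this
    simpa [Fprim] using h
  intro t ht s
  rcases le_or_gt s 0 with hs | hs
  · have h1 : Fprim f s = 0 := hFzero s hs
    have h2 : Fprim f (t * s) = 0 := hFzero _ (mul_nonpos_of_nonneg_of_nonpos ht.le hs)
    rw [hzero s hs, h1, h2]
    simp
  · set q : ℝ → ℝ := fun x => (f x * x - 2 * Fprim f x) / x ^ 4 with hq
    set φ : ℝ → ℝ := fun τ =>
      ((1 - τ ^ 2) / 2) * (f s * s - 2 * Fprim f s) + Fprim f (τ * s) / τ ^ 2 - Fprim f s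
      with hφ
    have hφ1 : φ 1 = 0 := by simp [hφ]
    have key : ∀ τ : ℝ, 0 < τ → HasDerivAt φ (τ * s ^ 4 * (q (τ * s) - q s)) τ := by
      intro τ hτ
      have h1 : HasDerivAt (fun τ : ℝ => Fprim f (τ * s)) (f (τ * s) * s) τ := by
        simpa [Function.comp_def] using (hF (τ * s)).comp τ ((hasDerivAt_id τ).mul_const s)
      have h2 : HasDerivAt (fun τ : ℝ => ((1 - τ ^ 2) / 2) * (f s * s - 2 * Fprim f s))
          ((-τ) * (f s * s - 2 * Fprim f s)) τ := by
        have := ((hasDerivAt_pow 2 τ).const_sub 1).div_const 2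
        have := this.mul_const (f s * s - 2 * Fprim f s)
        refine this.congr_deriv ?_
        ring
      have h3 : HasDerivAt (fun τ : ℝ => (τ ^ 2)⁻¹) (-(2 * τ ^ 1) / (τ ^ 2) ^ 2) τ :=
        (hasDerivAt_pow 2 τ).inv (pow_ne_zero 2 hτ.ne')
      have h4 := (h1.mul h3).const_add (0:ℝ)
      have h5 : HasDerivAt φ
          ((-τ) * (f s * s - 2 * Fprim f s)
            + (f (τ * s) * s * (τ ^ 2)⁻¹ + Fprim f (τ * s) * (-(2 * τ ^ 1) / (τ ^ 2) ^ 2))) τ := by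
        have h6 := (h2.add (h1.mul h3)).sub_const (Fprim f s)
        have : φ = fun τ : ℝ => ((1 - τ ^ 2) / 2) * (f s * s - 2 * Fprim f s)
            + Fprim f (τ * s) * (τ ^ 2)⁻¹ - Fprim f s := by
          funext τ; simp [hφ, div_eq_mul_inv]
        rw [this]
        exact h6
      convert h5 using 1
      have hτ4 : (τ:ℝ) ^ 4 ≠ 0 := pow_ne_zero 4 hτ.ne'
      have hs4 : s ^ 4 ≠ 0 := pow_ne_zero 4 hs.ne'
      have hts : ((τ * s) ^ 4) ≠ 0 := pow_ne_zero 4 (mul_ne_zero hτ.ne' hs.ne')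
      simp only [hq]
      field_simp
      ring
    have hcontφ : ∀ x : ℝ, 0 < x → ContinuousAt φ x := fun x hx =>
      (key x hx).differentiableAt.continuousAt
    have goal_eq : ((1 - t ^ 2) / 2) * (f s * s - 2 * Fprim f s)
        + Fprim f (t * s) / t ^ 2 - Fprim f s = φ t := rfl
    rw [goal_eq]
    rcases lt_trichotomy t 1 with h | h | h
    · have hanti : StrictAntiOn φ (Ioc 0 1) := by
        apply strictAntiOn_of_deriv_neg (convex_Ioc 0 1)
        · exact fun x hx => (hcontφ x hx.1).continuousWithinAt
        · intro x hx
          rw [interior_Ioc] at hx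
          rw [(key x hx.1).deriv]
          have hlt : q (x * s) < q s :=
            hmono (mem_Ioi.2 (mul_pos hx.1 hs)) (mem_Ioi.2 hs)
              (mul_lt_of_lt_one_left hs hx.2)
          have h7 : q (x * s) - q s < 0 := sub_neg.2 hlt
          exact mul_neg_of_pos_of_neg (mul_pos hx.1 (pow_pos hs 4)) h7
      have := hanti (mem_Ioc.2 ⟨ht, h.le⟩) (mem_Ioc.2 ⟨one_pos, le_refl 1⟩) h
      rw [hφ1] at this
      exact this.le
    · subst h; rw [hφ1]
    · have hmonoφ : StrictMonoOn φ (Ici 1) := by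
        apply strictMonoOn_of_deriv_pos (convex_Ici 1)
        · exact fun x hx => (hcontφ x (lt_of_lt_of_le one_pos hx)).continuousWithinAt
        · intro x hx
          rw [interior_Ici] at hx
          have hx0 : (0:ℝ) < x := lt_trans one_pos hx
          rw [(key x hx0).deriv]
          have hlt : q s < q (x * s) :=
            hmono (mem_Ioi.2 hs) (mem_Ioi.2 (mul_pos hx0 hs)) (lt_mul_of_one_lt_left hs hx)
          have : 0 < q (x * s) - q s := sub_pos.2 hlt
          positivity
      have := hmonoφ (mem_Ici.2 le_rfl) (mem_Ici.2 h.le) h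
      rw [hφ1] at this
      exact this.le
end

section
/- Let n ≥ 2 be an integer, ρ > 0, and R_n ≥ ρ(2 + log 2)/(2(2 − log 2)), and let w_n be the Moser-type function associated with ρ, R_n, n. Then ∫_{ℝ²}|∇w_n(x)|² dx = 1 − (log 2)/(log n) + ((2R_n + ρ)log²2)/(2(2R_n − ρ)log n) ≤ 1, and ∫_{ℝ²} w_n(x)² dx = (ρ²/(16 log n))(2log²2 + 2log 2 + 1 − (8 log n)/n² − 4/n²) + ((2R_n − ρ)(2R_n + 3ρ)log²2)/(48 log n). -/
open MeasureTheory Real Filter Set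
open scoped RealInnerProductSpace

section myaux
open MeasureTheory Real Filter Set
noncomputable section

lemma radial_integral (f : ℝ → ℝ) :
    (∫ x : R2, f ‖x‖) = 2 * π * ∫ y in Ioi (0:ℝ), y * f y := by
  have h := MeasureTheory.integral_fun_norm_addHaar (volume : Measure R2) f
  have hdim : Module.finrank ℝ R2 = 2 := finrank_euclideanSpace_fin
  rw [hdim] at h
  have hball : ((volume : Measure R2) (Metric.ball 0 1)).toReal = π := by
    rw [EuclideanSpace.volume_ball]
    norm_num
    exact Real.sq_sqrt pi_pos.le
  simp only [pow_one, smul_eq_mul, nsmul_eq_mul, Nat.cast_ofNat] at h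
  rw [h, measureReal_def, hball]
  have h2 : ∫ (y : ℝ) in Ioi (0:ℝ), y ^ (2 - 1) * f y = ∫ (y : ℝ) in Ioi (0:ℝ), y * f y :=
    setIntegral_congr_fun measurableSet_Ioi fun y _ => by ring
  rw [h2]
  ring

lemma hasGradientAt_comp_norm {φ : ℝ → ℝ} {x : R2} (hx : x ≠ 0) {d : ℝ}
    (hφ : HasDerivAt φ d ‖x‖) :
    HasGradientAt (fun y : R2 => φ ‖y‖) ((d / ‖x‖) • x) x := by
  have hx' : ‖x‖ ≠ 0 := norm_ne_zero_iff.mpr hx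
  have hxpos : 0 < ‖x‖ := norm_pos_iff.mpr hx
  have h1 : HasFDerivAt (fun y : R2 => ‖y‖ ^ 2) (2 • (innerSL ℝ x)) x := by
    simpa using (hasFDerivAt_id x).norm_sq
  have h2 : HasFDerivAt (fun y : R2 => ‖y‖) ((‖x‖⁻¹) • innerSL ℝ x) x := by
    have h3 := h1.sqrt (by positivity)
    have hsq : (fun y : R2 => Real.sqrt (‖y‖ ^ 2)) = fun y : R2 => ‖y‖ := by
      funext y; rw [Real.sqrt_sq (norm_nonneg y)]
    rw [hsq] at h3
    refine h3.congr_fderiv (Eq.symm ?_)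
    refine ContinuousLinearMap.ext fun y => ?_
    simp only [Real.sqrt_sq (norm_nonneg x), ContinuousLinearMap.coe_smul',
      Pi.smul_apply, smul_eq_mul, ContinuousLinearMap.smul_apply, nsmul_eq_mul,
      Nat.cast_ofNat, one_div]
    field_simp
  have h4 := hφ.comp_hasFDerivAt x h2
  rw [hasGradientAt_iff_hasFDerivAt]
  refine h4.congr_fderiv (Eq.symm ?_)
  refine ContinuousLinearMap.ext fun y => ?_
  simp only [InnerProductSpace.toDual_apply_apply, ContinuousLinearMap.coe_smul',
    Pi.smul_apply, innerSL_apply_apply, smul_eq_mul, real_inner_smul_left]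
  ring

lemma norm_grad_sq {d : ℝ} {x : R2} (hx : x ≠ 0) : ‖(d / ‖x‖) • x‖ ^ 2 = d ^ 2 := by
  have hx' : ‖x‖ ≠ 0 := norm_ne_zero_iff.mpr hx
  rw [norm_smul]
  rw [mul_pow, Real.norm_eq_abs, sq_abs, div_pow]
  field_simp

lemma split_Ioi {g : ℝ → ℝ} {a b c : ℝ} (h0a : 0 ≤ a) (hab : a ≤ b) (hbc : b ≤ c)
    (hzero : ∀ r ∈ Ioi c, g r = 0)
    (i1 : IntegrableOn g (Ioc 0 a)) (i2 : IntegrableOn g (Ioc a b))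
    (i3 : IntegrableOn g (Ioc b c)) :
    ∫ y in Ioi (0:ℝ), g y
      = (∫ y in Ioc (0:ℝ) a, g y) + (∫ y in Ioc a b, g y) + ∫ y in Ioc b c, g y := by
  have hIoc : Ioc (0:ℝ) a ∪ Ioc a b = Ioc 0 b := Ioc_union_Ioc_eq_Ioc h0a hab
  have hIoc2 : Ioc (0:ℝ) b ∪ Ioc b c = Ioc 0 c := Ioc_union_Ioc_eq_Ioc (h0a.trans hab) hbc
  have hIoi : Ioc (0:ℝ) c ∪ Ioi c = Ioi 0 := Ioc_union_Ioi_eq_Ioi ((h0a.trans hab).trans hbc)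
  have e0 : ∫ y in Ioi c, g y = 0 := by
    rw [setIntegral_congr_fun measurableSet_Ioi hzero]
    simp
  have iI : IntegrableOn g (Ioi c) :=
    (integrableOn_zero (μ := volume) (s := Ioi c)).congr_fun
      (fun r hr => (hzero r hr).symm) measurableSet_Ioi
  have i12 : IntegrableOn g (Ioc (0:ℝ) b) := hIoc ▸ i1.union i2
  have i123 : IntegrableOn g (Ioc (0:ℝ) c) := hIoc2 ▸ i12.union i3
  rw [← hIoi, setIntegral_union Ioc_disjoint_Ioi_same measurableSet_Ioi i123 iI, e0, add_zero,
      ← hIoc2, setIntegral_union (Ioc_disjoint_Ioc_of_le le_rfl) measurableSet_Ioc i12 i3,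
      ← hIoc, setIntegral_union (Ioc_disjoint_Ioc_of_le le_rfl) measurableSet_Ioc i1 i2]

def profAux (n : ℕ) (ρ R r : ℝ) : ℝ :=
  (1 / Real.sqrt (2 * π)) *
    (if r ≤ ρ / n then Real.sqrt (Real.log n)
     else if r ≤ ρ / 2 then Real.log (ρ / r) / Real.sqrt (Real.log n)
     else if r ≤ R then 2 * (R - r) * Real.log 2 / ((2 * R - ρ) * Real.sqrt (Real.log n))
     else 0)

def gpAux (n : ℕ) (ρ R r : ℝ) : ℝ :=
  if r ≤ ρ / n then 0
  else if r ≤ ρ / 2 then 1 / (Real.sqrt (2 * π) * Real.sqrt (Real.log n) * r)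
  else if r ≤ R then 2 * Real.log 2 / (Real.sqrt (2 * π) * (2 * R - ρ) * Real.sqrt (Real.log n))
  else 0

lemma moser_eq_prof (n : ℕ) (ρ R : ℝ) (x : R2) : moser n ρ R x = profAux n ρ R ‖x‖ := rfl

lemma grad_moser_ae (n : ℕ) (hn : 2 ≤ n) (ρ R : ℝ) (hρ : 0 < ρ) (hRρ : ρ / 2 < R) :
    ∀ᵐ x : R2, ‖gradient (moser n ρ R) x‖ ^ 2 = gpAux n ρ R ‖x‖ ^ 2 := by
  have hn2 : (2:ℝ) ≤ n := by exact_mod_cast hn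
  have hn0 : (0:ℝ) < n := by linarith
  have hLn : 0 < Real.log n := Real.log_pos (by linarith)
  have ht0 : 0 < Real.sqrt (Real.log n) := Real.sqrt_pos.mpr hLn
  have hs0 : 0 < Real.sqrt (2 * π) := Real.sqrt_pos.mpr (by positivity)
  have hρn : 0 < ρ / n := by positivity
  have hρn2 : ρ / n ≤ ρ / 2 := by
    rw [div_le_div_iff₀ hn0 two_pos]; nlinarith
  have sph : ∀ a : ℝ, ∀ᵐ x : R2, ‖x‖ ≠ a := by
    intro a
    rw [ae_iff]
    have hs : {x : R2 | ¬‖x‖ ≠ a} = Metric.sphere 0 a := by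
      ext x; simp [mem_sphere_zero_iff_norm]
    rw [hs]
    exact Measure.addHaar_sphere volume 0 a
  filter_upwards [sph (ρ / n), sph (ρ / 2), sph R] with x e1 e2 e3
  rcases lt_or_gt_of_ne e1 with h1 | h1
  · -- constant region
    have hev : moser n ρ R =ᶠ[nhds x]
        (fun _ : R2 => (1 / Real.sqrt (2 * π)) * Real.sqrt (Real.log n)) := by
      have ho : IsOpen {y : R2 | ‖y‖ < ρ / n} := isOpen_lt continuous_norm continuous_const
      filter_upwards [ho.mem_nhds h1] with y hy
      simp only [moser, if_pos (le_of_lt hy)]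
    rw [hev.gradient_eq, gradient_fun_const]
    rw [gpAux, if_pos h1.le]
    simp
  · rcases lt_or_gt_of_ne e2 with h2 | h2
    · -- log region
      have hr0 : 0 < ‖x‖ := lt_trans hρn h1
      have hx0 : x ≠ 0 := norm_pos_iff.mp hr0
      have hd : HasDerivAt
          (fun s : ℝ => (1 / Real.sqrt (2 * π)) * ((Real.log ρ - Real.log s) / Real.sqrt (Real.log n)))
          (-(1 / (Real.sqrt (2 * π) * Real.sqrt (Real.log n) * ‖x‖))) ‖x‖ := by
        have h := (((Real.hasDerivAt_log hr0.ne').const_sub (Real.log ρ)).div_const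
          (Real.sqrt (Real.log n))).const_mul (1 / Real.sqrt (2 * π))
        refine h.congr_deriv (Eq.symm ?_)
        field_simp
      have hev : moser n ρ R =ᶠ[nhds x]
          (fun y : R2 => (1 / Real.sqrt (2 * π)) *
            ((Real.log ρ - Real.log ‖y‖) / Real.sqrt (Real.log n))) := by
        have ho : IsOpen {y : R2 | ρ / n < ‖y‖ ∧ ‖y‖ < ρ / 2} :=
          (isOpen_lt continuous_const continuous_norm).inter
            (isOpen_lt continuous_norm continuous_const)
        filter_upwards [ho.mem_nhds ⟨h1, h2⟩] with y hy
        have hy0 : (0:ℝ) < ‖y‖ := lt_trans hρn hy.1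
        simp only [moser, if_neg (not_le.mpr hy.1), if_pos hy.2.le]
        rw [Real.log_div hρ.ne' hy0.ne']
      have hg := (hasGradientAt_comp_norm hx0 hd).congr_of_eventuallyEq hev
      rw [hg.gradient, norm_grad_sq hx0]
      rw [gpAux, if_neg (not_le.mpr h1), if_pos h2.le]
      ring
    · rcases lt_or_gt_of_ne e3 with h3 | h3
      · -- linear region
        have hr0 : 0 < ‖x‖ := lt_trans (by positivity) h2
        have hx0 : x ≠ 0 := norm_pos_iff.mp hr0
        have hd : HasDerivAt
            (fun s : ℝ => (1 / Real.sqrt (2 * π)) *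
              (2 * (R - s) * Real.log 2 / ((2 * R - ρ) * Real.sqrt (Real.log n))))
            (-(2 * Real.log 2 /
              (Real.sqrt (2 * π) * (2 * R - ρ) * Real.sqrt (Real.log n)))) ‖x‖ := by
        -- derivative of R - s is -1
          have hbase : HasDerivAt (fun s : ℝ => R - s) (-1) ‖x‖ := by
            simpa using (hasDerivAt_id ‖x‖).const_sub R
          have h := ((((hbase.const_mul 2).mul_const (Real.log 2)).div_const
            ((2 * R - ρ) * Real.sqrt (Real.log n))).const_mul (1 / Real.sqrt (2 * π)))
          refine h.congr_deriv (Eq.symm ?_)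
          have h2Rρ : (2 * R - ρ) ≠ 0 := by
            intro hc
            have : ρ / 2 < R := hRρ
            nlinarith
          field_simp
        have hev : moser n ρ R =ᶠ[nhds x]
            (fun y : R2 => (1 / Real.sqrt (2 * π)) *
              (2 * (R - ‖y‖) * Real.log 2 / ((2 * R - ρ) * Real.sqrt (Real.log n)))) := by
          have ho : IsOpen {y : R2 | ρ / 2 < ‖y‖ ∧ ‖y‖ < R} :=
            (isOpen_lt continuous_const continuous_norm).inter
              (isOpen_lt continuous_norm continuous_const)
          filter_upwards [ho.mem_nhds ⟨h2, h3⟩] with y hy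
          have hyn : ¬ ‖y‖ ≤ ρ / n := not_le.mpr (lt_of_le_of_lt hρn2 hy.1)
          simp only [moser, if_neg hyn, if_neg (not_le.mpr hy.1), if_pos hy.2.le]
        have hg := (hasGradientAt_comp_norm hx0 hd).congr_of_eventuallyEq hev
        rw [hg.gradient, norm_grad_sq hx0]
        rw [gpAux, if_neg (not_le.mpr (lt_of_le_of_lt hρn2 h2)),
          if_neg (not_le.mpr h2), if_pos h3.le]
        ring
      · -- zero region
        have hev : moser n ρ R =ᶠ[nhds x] (fun _ : R2 => (0:ℝ)) := by
          have ho : IsOpen {y : R2 | R < ‖y‖} := isOpen_lt continuous_const continuous_norm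
          filter_upwards [ho.mem_nhds h3] with y hy
          have h1' : ¬ ‖y‖ ≤ ρ / n := not_le.mpr (lt_of_le_of_lt (hρn2.trans hRρ.le) hy)
          have h2' : ¬ ‖y‖ ≤ ρ / 2 := not_le.mpr (lt_of_le_of_lt hRρ.le hy)
          simp only [moser, if_neg h1', if_neg h2', if_neg (not_le.mpr hy), mul_zero]
        rw [hev.gradient_eq, gradient_fun_const]
        have h1' : ¬ ‖x‖ ≤ ρ / n := not_le.mpr (lt_of_le_of_lt (hρn2.trans hRρ.le) h3)
        have h2' : ¬ ‖x‖ ≤ ρ / 2 := not_le.mpr (lt_of_le_of_lt hRρ.le h3)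
        rw [gpAux, if_neg h1', if_neg h2', if_neg (not_le.mpr h3)]
        simp

end
end myaux

set_option maxHeartbeats 1000000 in
/-- the exact `L²` norms of the Moser-type functions and of their
gradients. -/
theorem statement13 (n : ℕ) (hn : 2 ≤ n) (ρ R : ℝ) (hρ : 0 < ρ)
    (hR : ρ * (2 + Real.log 2) / (2 * (2 - Real.log 2)) ≤ R) :
    (∫ x : R2, ‖gradient (moser n ρ R) x‖ ^ 2)
      = 1 - Real.log 2 / Real.log n
          + ((2 * R + ρ) * (Real.log 2) ^ 2) / (2 * (2 * R - ρ) * Real.log n) ∧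
    (∫ x : R2, ‖gradient (moser n ρ R) x‖ ^ 2) ≤ 1 ∧
    (∫ x : R2, (moser n ρ R x) ^ 2)
      = (ρ ^ 2 / (16 * Real.log n)) *
          (2 * (Real.log 2) ^ 2 + 2 * Real.log 2 + 1
            - 8 * Real.log n / (n : ℝ) ^ 2 - 4 / (n : ℝ) ^ 2)
        + ((2 * R - ρ) * (2 * R + 3 * ρ) * (Real.log 2) ^ 2) / (48 * Real.log n) := by
  have hn2 : (2:ℝ) ≤ n := by exact_mod_cast hn
  have hn0 : (0:ℝ) < n := by linarith
  have hLn : 0 < Real.log n := Real.log_pos (by linarith)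
  have hL2 : 0 < Real.log 2 := Real.log_pos one_lt_two
  have hL2lt : Real.log 2 < 1 := by
    have := Real.log_two_lt_d9; linarith
  have hπ : 0 < π := Real.pi_pos
  have hRρ : ρ / 2 < R := by
    have h1 : ρ / 2 < ρ * (2 + Real.log 2) / (2 * (2 - Real.log 2)) := by
      rw [div_lt_div_iff₀ two_pos (by linarith)]
      nlinarith
    linarith
  have h2Rρ : 0 < 2 * R - ρ := by linarith
  have hρn : 0 < ρ / n := by positivity
  have hρn2 : ρ / n ≤ ρ / 2 := by
    rw [div_le_div_iff₀ hn0 two_pos]; nlinarith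
  have ht0 : 0 < Real.sqrt (Real.log n) := Real.sqrt_pos.mpr hLn
  have hs0 : 0 < Real.sqrt (2 * π) := Real.sqrt_pos.mpr (by positivity)
  have hs2 : Real.sqrt (2 * π) ^ 2 = 2 * π := Real.sq_sqrt (by positivity)
  have ht2 : Real.sqrt (Real.log n) ^ 2 = Real.log n := Real.sq_sqrt hLn.le
  -- the gradient integral
  have hgrad : (∫ x : R2, ‖gradient (moser n ρ R) x‖ ^ 2)
      = 1 - Real.log 2 / Real.log n
        + ((2 * R + ρ) * (Real.log 2) ^ 2) / (2 * (2 * R - ρ) * Real.log n) := by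
    have e1 : (∫ x : R2, ‖gradient (moser n ρ R) x‖ ^ 2)
        = ∫ x : R2, (fun r => gpAux n ρ R r ^ 2) ‖x‖ :=
      integral_congr_ae (grad_moser_ae n hn ρ R hρ hRρ)
    rw [e1, radial_integral (fun r => gpAux n ρ R r ^ 2)]
    set g : ℝ → ℝ := fun y => y * gpAux n ρ R y ^ 2 with hgdef
    have eq1 : EqOn (fun _ : ℝ => (0:ℝ)) g (Ioc 0 (ρ/n)) := by
      intro y hy
      simp only [hgdef, gpAux, if_pos hy.2]
      ring
    have eq2 : EqOn (fun y : ℝ => (1/(2*π*Real.log n)) * (1/y)) g (Ioc (ρ/n) (ρ/2)) := by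
      intro y hy
      have hy0 : 0 < y := lt_trans hρn hy.1
      simp only [hgdef, gpAux, if_neg (not_le.mpr hy.1), if_pos hy.2]
      simp only [mul_pow, div_pow, one_pow]
      rw [hs2, ht2]
      field_simp
    have eq3 : EqOn (fun y : ℝ => (2*(Real.log 2)^2/(π*(2*R-ρ)^2*Real.log n)) * y)
        g (Ioc (ρ/2) R) := by
      intro y hy
      simp only [hgdef, gpAux, if_neg (not_le.mpr (lt_of_le_of_lt hρn2 hy.1)),
        if_neg (not_le.mpr hy.1), if_pos hy.2]
      simp only [mul_pow, div_pow, one_pow]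
      rw [hs2, ht2]
      field_simp
    have hzero : ∀ r ∈ Ioi R, g r = 0 := by
      intro r hr
      have h1' : ¬ r ≤ ρ / n := not_le.mpr (lt_of_le_of_lt (hρn2.trans hRρ.le) hr)
      have h2' : ¬ r ≤ ρ / 2 := not_le.mpr (lt_of_le_of_lt hRρ.le hr)
      simp only [hgdef, gpAux, if_neg h1', if_neg h2', if_neg (not_le.mpr (mem_Ioi.mp hr))]
      ring
    have i1 : IntegrableOn g (Ioc 0 (ρ/n)) :=
      (integrableOn_zero (μ := volume)).congr_fun eq1 measurableSet_Ioc
    have c2 : ContinuousOn (fun y : ℝ => (1/(2*π*Real.log n)) * (1/y)) (Icc (ρ/n) (ρ/2)) := by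
      apply ContinuousOn.mul continuousOn_const
      exact ContinuousOn.div continuousOn_const continuousOn_id
        (fun y hy => ne_of_gt (lt_of_lt_of_le hρn hy.1))
    have i2 : IntegrableOn g (Ioc (ρ/n) (ρ/2)) :=
      ((c2.integrableOn_Icc).mono_set Ioc_subset_Icc_self).congr_fun eq2 measurableSet_Ioc
    have i3 : IntegrableOn g (Ioc (ρ/2) R) :=
      (((continuous_const.mul continuous_id).continuousOn.integrableOn_Icc).mono_set
        Ioc_subset_Icc_self).congr_fun eq3 measurableSet_Ioc
    rw [split_Ioi hρn.le hρn2 hRρ.le hzero i1 i2 i3]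
    rw [← setIntegral_congr_fun measurableSet_Ioc eq1,
        ← setIntegral_congr_fun measurableSet_Ioc eq2,
        ← setIntegral_congr_fun measurableSet_Ioc eq3]
    rw [← intervalIntegral.integral_of_le hρn.le,
        ← intervalIntegral.integral_of_le hρn2,
        ← intervalIntegral.integral_of_le hRρ.le]
    rw [intervalIntegral.integral_const_mul, intervalIntegral.integral_const_mul]
    rw [integral_one_div (notMem_uIcc_of_lt hρn (by linarith)), integral_id]
    have hdiv : (ρ/2)/(ρ/n) = (n:ℝ)/2 := by field_simp
    rw [hdiv, Real.log_div hn0.ne' two_ne_zero]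
    simp only [intervalIntegral.integral_const, smul_eq_mul, mul_zero, sub_zero,
      intervalIntegral.integral_zero]
    field_simp
    ring
  refine ⟨hgrad, ?_, ?_⟩
  · -- inequality
    rw [hgrad]
    have key : (2*R + ρ) * Real.log 2 ≤ 2 * (2*R - ρ) := by
      rw [div_le_iff₀ (by nlinarith)] at hR
      nlinarith
    have h2 : (2*R + ρ) * (Real.log 2)^2 / (2 * (2*R - ρ) * Real.log n)
        ≤ Real.log 2 / Real.log n := by
      rw [div_le_div_iff₀ (by positivity) hLn]
      nlinarith [mul_le_mul_of_nonneg_right key (mul_nonneg hL2.le hLn.le)]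
    linarith
  · -- mass integral
    have e1 : (fun x : R2 => moser n ρ R x ^ 2)
        = fun x => (fun r => profAux n ρ R r ^ 2) ‖x‖ := rfl
    rw [show (∫ x : R2, moser n ρ R x ^ 2)
        = ∫ x : R2, (fun r => profAux n ρ R r ^ 2) ‖x‖ from by rw [← e1]]
    rw [radial_integral (fun r => profAux n ρ R r ^ 2)]
    set g : ℝ → ℝ := fun y => y * profAux n ρ R y ^ 2 with hgdef
    have eq1 : EqOn (fun y : ℝ => (Real.log n/(2*π)) * y) g (Ioc 0 (ρ/n)) := by
      intro y hy
      simp only [hgdef, profAux, if_pos hy.2]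
      simp only [mul_pow, div_pow, one_pow]
      rw [hs2, ht2]
      field_simp
    have eq2 : EqOn (fun y : ℝ => (1/(2*π*Real.log n)) * (y * (Real.log ρ - Real.log y)^2))
        g (Ioc (ρ/n) (ρ/2)) := by
      intro y hy
      have hy0 : 0 < y := lt_trans hρn hy.1
      simp only [hgdef, profAux, if_neg (not_le.mpr hy.1), if_pos hy.2]
      rw [Real.log_div hρ.ne' hy0.ne']
      simp only [mul_pow, div_pow, one_pow]
      rw [hs2, ht2]
      field_simp
    have eq3 : EqOn (fun y : ℝ => (2*(Real.log 2)^2/(π*(2*R-ρ)^2*Real.log n)) * (y*(R-y)^2))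
        g (Ioc (ρ/2) R) := by
      intro y hy
      simp only [hgdef, profAux, if_neg (not_le.mpr (lt_of_le_of_lt hρn2 hy.1)),
        if_neg (not_le.mpr hy.1), if_pos hy.2]
      simp only [mul_pow, div_pow, one_pow]
      rw [hs2, ht2]
      field_simp
    have hzero : ∀ r ∈ Ioi R, g r = 0 := by
      intro r hr
      have h1' : ¬ r ≤ ρ / n := not_le.mpr (lt_of_le_of_lt (hρn2.trans hRρ.le) hr)
      have h2' : ¬ r ≤ ρ / 2 := not_le.mpr (lt_of_le_of_lt hRρ.le hr)
      simp only [hgdef, profAux, if_neg h1', if_neg h2', if_neg (not_le.mpr (mem_Ioi.mp hr))]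
      ring
    have i1 : IntegrableOn g (Ioc 0 (ρ/n)) :=
      (((continuous_const.mul continuous_id).continuousOn.integrableOn_Icc).mono_set
        Ioc_subset_Icc_self).congr_fun eq1 measurableSet_Ioc
    have c2 : ContinuousOn (fun y : ℝ => (1/(2*π*Real.log n)) * (y * (Real.log ρ - Real.log y)^2))
        (Icc (ρ/n) (ρ/2)) := by
      have hlog : ContinuousOn Real.log (Icc (ρ/n) (ρ/2)) :=
        Real.continuousOn_log.mono
          (fun y hy => Set.mem_compl_singleton_iff.mpr (ne_of_gt (lt_of_lt_of_le hρn hy.1)))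
      exact continuousOn_const.mul (continuousOn_id.mul ((continuousOn_const.sub hlog).pow 2))
    have i2 : IntegrableOn g (Ioc (ρ/n) (ρ/2)) :=
      ((c2.integrableOn_Icc).mono_set Ioc_subset_Icc_self).congr_fun eq2 measurableSet_Ioc
    have c3 : Continuous (fun y : ℝ => (2*(Real.log 2)^2/(π*(2*R-ρ)^2*Real.log n)) * (y*(R-y)^2)) := by
      continuity
    have i3 : IntegrableOn g (Ioc (ρ/2) R) :=
      ((c3.continuousOn.integrableOn_Icc).mono_set
        Ioc_subset_Icc_self).congr_fun eq3 measurableSet_Ioc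
    rw [split_Ioi hρn.le hρn2 hRρ.le hzero i1 i2 i3]
    rw [← setIntegral_congr_fun measurableSet_Ioc eq1,
        ← setIntegral_congr_fun measurableSet_Ioc eq2,
        ← setIntegral_congr_fun measurableSet_Ioc eq3]
    rw [← intervalIntegral.integral_of_le hρn.le,
        ← intervalIntegral.integral_of_le hρn2,
        ← intervalIntegral.integral_of_le hRρ.le]
    rw [intervalIntegral.integral_const_mul, intervalIntegral.integral_const_mul,
        intervalIntegral.integral_const_mul]
    rw [integral_id]
    -- middle piece via antiderivative
    have hmid : (∫ y in (ρ/n)..(ρ/2), y * (Real.log ρ - Real.log y)^2)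
        = ((ρ/2)^2/2*(Real.log ρ - Real.log (ρ/2))^2 + (ρ/2)^2/2*(Real.log ρ - Real.log (ρ/2))
            + (ρ/2)^2/4)
          - ((ρ/n)^2/2*(Real.log ρ - Real.log (ρ/n))^2 + (ρ/n)^2/2*(Real.log ρ - Real.log (ρ/n))
            + (ρ/n)^2/4) := by
      have := intervalIntegral.integral_eq_sub_of_hasDerivAt
        (f := fun r : ℝ => r^2/2*(Real.log ρ - Real.log r)^2 + r^2/2*(Real.log ρ - Real.log r)
          + r^2/4)
        (f' := fun y : ℝ => y * (Real.log ρ - Real.log y)^2)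
        (a := ρ/n) (b := ρ/2) ?_ ?_
      · exact this
      · intro y hy
        rw [uIcc_of_le hρn2] at hy
        have hy0 : 0 < y := lt_of_lt_of_le hρn hy.1
        have hL : HasDerivAt (fun r : ℝ => Real.log ρ - Real.log r) (-y⁻¹) y := by
          simpa using (Real.hasDerivAt_log hy0.ne').const_sub (Real.log ρ)
        have h := ((((hasDerivAt_pow 2 y).div_const 2).mul (hL.pow 2)).add
          (((hasDerivAt_pow 2 y).div_const 2).mul hL)).add ((hasDerivAt_pow 2 y).div_const 4)
        refine h.congr_deriv (Eq.symm ?_)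
        norm_num
        field_simp
        ring
      · apply ContinuousOn.intervalIntegrable
        rw [uIcc_of_le hρn2]
        have hlog : ContinuousOn Real.log (Icc (ρ/n) (ρ/2)) :=
          Real.continuousOn_log.mono
            (fun y hy => Set.mem_compl_singleton_iff.mpr (ne_of_gt (lt_of_lt_of_le hρn hy.1)))
        exact continuousOn_id.mul ((continuousOn_const.sub hlog).pow 2)
    have hlin : (∫ y in (ρ/2)..R, y * (R - y)^2)
        = (R^2*R^2/2 - 2*R*R^3/3 + R^4/4)
          - (R^2*(ρ/2)^2/2 - 2*R*(ρ/2)^3/3 + (ρ/2)^4/4) := by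
      have := intervalIntegral.integral_eq_sub_of_hasDerivAt
        (f := fun r : ℝ => R^2*r^2/2 - 2*R*r^3/3 + r^4/4)
        (f' := fun y : ℝ => y * (R - y)^2)
        (a := ρ/2) (b := R) ?_ ?_
      · exact this
      · intro y hy
        have h := ((((hasDerivAt_pow 2 y).const_mul (R^2)).div_const 2).sub
          (((hasDerivAt_pow 3 y).const_mul (2*R)).div_const 3)).add
          ((hasDerivAt_pow 4 y).div_const 4)
        refine h.congr_deriv (Eq.symm ?_)
        norm_num
        ring
      · exact (Continuous.intervalIntegrable (by continuity) _ _)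
    rw [hmid, hlin]
    rw [Real.log_div hρ.ne' two_ne_zero, Real.log_div hρ.ne' hn0.ne']
    field_simp
    ring
end

section
/- Let h: ℝ → ℝ be of class C¹, vanishing on (−∞,0], with H(t) = ∫₀ᵗ h(s) ds, and suppose there is θ > 4 with 0 < θH(t) ≤ h(t)t for all t > 0. Fix R > 0, ᾱ₀ > 0, τ ≥ 2 and δ̄ ∈ (0,2] with δ̄ ≤ τ, and let f^{R,δ̄} be the truncated nonlinearity with primitive F^{R,δ̄}(t) = ∫₀ᵗ f^{R,δ̄}(s) ds. Then for all t > 0, 0 < θ F^{R,δ̄}(t) ≤ f^{R,δ̄}(t)·t. -/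
open MeasureTheory Real Filter Set
open scoped RealInnerProductSpace

/-- the Ambrosetti–Rabinowitz condition for the truncated
nonlinearity `f^{R,δ̄}`. -/
theorem statement17 (h : ℝ → ℝ) (θ R α₀ τ δb : ℝ)
    (hC1 : ContDiff ℝ 1 h) (hzero : ∀ t ≤ (0:ℝ), h t = 0)
    (hθ : 4 < θ)
    (hAR : ∀ t > (0:ℝ), 0 < θ * Fprim h t ∧ θ * Fprim h t ≤ h t * t)
    (hR : 0 < R) (hα : 0 < α₀) (hτ : 2 ≤ τ)
    (hδ1 : 0 < δb) (hδ2 : δb ≤ 2) (hδτ : δb ≤ τ) :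
    ∀ t > (0:ℝ), 0 < θ * Fprim (fR h R α₀ τ δb) t ∧
      θ * Fprim (fR h R α₀ τ δb) t ≤ fR h R α₀ τ δb t * t := by
  have hθ0 : (0:ℝ) < θ := by linarith
  have hτ0 : (0:ℝ) ≤ τ := by linarith
  have hhpos : ∀ s > (0:ℝ), 0 < h s := by
    intro s hs
    have h1 := (hAR s hs).1
    have h2 := (hAR s hs).2
    nlinarith
  intro t ht
  set g : ℝ → ℝ := fun s =>
    if s ≤ R then Real.exp (α₀ * s ^ τ)
    else Real.exp (α₀ * R ^ (τ - δb) * s ^ δb) with hgdef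
  have hgeq : ∀ s, fR h R α₀ τ δb s = h s * g s := by
    intro s
    rcases le_or_gt s 0 with h0 | h0
    · rw [hzero s h0]
      simp [fR, h0]
    · unfold fR
      rw [if_neg (not_le.mpr h0)]
      by_cases hsR : s ≤ R
      · simp only [hgdef, if_pos hsR]; rfl
      · simp only [hgdef, if_neg hsR]; rfl
  have hcg : Continuous g := by
    apply Continuous.if_le
    · exact Real.continuous_exp.comp
        (continuous_const.mul (Real.continuous_rpow_const hτ0))
    · exact Real.continuous_exp.comp
        (continuous_const.mul (Real.continuous_rpow_const hδ1.le))
    · exact continuous_id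
    · exact continuous_const
    · intro x hx
      change x = R at hx
      subst hx
      congr 1
      rw [mul_assoc, ← Real.rpow_add hR, sub_add_cancel]
  have hcf : Continuous fun s => h s * g s := hC1.continuous.mul hcg
  have hg1 : ∀ s, 0 ≤ s → 1 ≤ g s := by
    intro s hs
    simp only [hgdef]
    split_ifs with h1
    · exact Real.one_le_exp (mul_nonneg hα.le (Real.rpow_nonneg hs τ))
    · exact Real.one_le_exp (mul_nonneg (mul_nonneg hα.le (Real.rpow_nonneg hR.le _))
        (Real.rpow_nonneg hs _))
  have hgmono : ∀ s, 0 ≤ s → s ≤ t → g s ≤ g t := by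
    intro s hs hst
    have hst' : (0:ℝ) ≤ t := le_trans hs hst
    simp only [hgdef]
    by_cases hs1 : s ≤ R <;> by_cases ht1 : t ≤ R
    · rw [if_pos hs1, if_pos ht1]
      exact Real.exp_le_exp.mpr (mul_le_mul_of_nonneg_left
        (Real.rpow_le_rpow hs hst hτ0) hα.le)
    · rw [if_pos hs1, if_neg ht1]
      push_neg at ht1
      apply Real.exp_le_exp.mpr
      have h1 : s ^ τ ≤ R ^ τ := Real.rpow_le_rpow hs hs1 hτ0
      have h2 : R ^ τ = R ^ (τ - δb) * R ^ δb := by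
        rw [← Real.rpow_add hR, sub_add_cancel]
      have h3 : R ^ δb ≤ t ^ δb := Real.rpow_le_rpow hR.le ht1.le hδ1.le
      have h4 : (0:ℝ) ≤ R ^ (τ - δb) := Real.rpow_nonneg hR.le _
      calc α₀ * s ^ τ ≤ α₀ * (R ^ (τ - δb) * R ^ δb) := by
            rw [← h2]; exact mul_le_mul_of_nonneg_left h1 hα.le
        _ ≤ α₀ * (R ^ (τ - δb) * t ^ δb) := by
            apply mul_le_mul_of_nonneg_left _ hα.le
            exact mul_le_mul_of_nonneg_left h3 h4
        _ = α₀ * R ^ (τ - δb) * t ^ δb := by ring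
    · exact absurd (hst.trans ht1) hs1
    · rw [if_neg hs1, if_neg ht1]
      apply Real.exp_le_exp.mpr
      exact mul_le_mul_of_nonneg_left (Real.rpow_le_rpow hs hst hδ1.le)
        (mul_nonneg hα.le (Real.rpow_nonneg hR.le _))
  have hFeq : Fprim (fR h R α₀ τ δb) t = ∫ s in (0:ℝ)..t, h s * g s :=
    intervalIntegral.integral_congr fun s _ => hgeq s
  have hgt1 : (1:ℝ) ≤ g t := hg1 t ht.le
  constructor
  · rw [hFeq]
    apply mul_pos hθ0
    apply intervalIntegral.intervalIntegral_pos_of_pos_on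
      (hcf.intervalIntegrable 0 t) _ ht
    intro x hx
    exact mul_pos (hhpos x hx.1) (lt_of_lt_of_le one_pos (hg1 x hx.1.le))
  · rw [hFeq, hgeq]
    have key : (∫ s in (0:ℝ)..t, h s * g s) ≤ ∫ s in (0:ℝ)..t, h s * g t := by
      apply intervalIntegral.integral_mono_on ht.le (hcf.intervalIntegrable 0 t)
        ((hC1.continuous.mul continuous_const).intervalIntegrable 0 t)
      intro x hx
      rcases eq_or_lt_of_le hx.1 with h0 | h0
      · rw [← h0]; simp [hzero 0 le_rfl]
      · exact mul_le_mul_of_nonneg_left (hgmono x h0.le hx.2) (hhpos x h0).le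
    have hconst : (∫ s in (0:ℝ)..t, h s * g t) = Fprim h t * g t :=
      intervalIntegral.integral_mul_const _ _
    have hHle : θ * Fprim h t ≤ h t * t := (hAR t ht).2
    calc θ * ∫ s in (0:ℝ)..t, h s * g s
        ≤ θ * (Fprim h t * g t) := by
          rw [← hconst]; exact mul_le_mul_of_nonneg_left key hθ0.le
      _ = (θ * Fprim h t) * g t := by ring
      _ ≤ (h t * t) * g t := mul_le_mul_of_nonneg_right hHle (le_trans zero_le_one hgt1)
      _ = h t * g t * t := by ring
end

section
/- Let h: ℝ → ℝ be of class C¹, vanishing on (−∞,0], with H(t) = ∫₀ᵗ h(s) ds, and suppose: there is θ > 4 with 0 < θH(t) ≤ h(t)t for all t > 0; t ↦ (h(t)t − 2H(t))/t⁴ is strictly increasing on (0,∞); and 0 ≤ |h(t)| ≤ M e^{γ|t|^δ} for all t ∈ ℝ with constants γ, M > 0 and δ ∈ [8/θ, 2). Fix R > 0, ᾱ₀ > 0, τ ≥ 2 and δ̄ ∈ [8/θ, 2] with δ̄ ≤ τ. Then the function t ↦ (f^{R,δ̄}(t)t − 2F^{R,δ̄}(t))/t⁴ is monotone increasing on (0,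 +∞). -/
open MeasureTheory Real Filter Set
open scoped RealInnerProductSpace

open scoped Topology in
private lemma slope_deriv_nonneg {f : ℝ → ℝ} {D t : ℝ} (hm : MonotoneOn f (Ioi 0))
    (ht : 0 < t) (hd : HasDerivAt f D t) : 0 ≤ D := by
  have h1 : Tendsto (slope f t) (𝓝[>] t) (𝓝 D) :=
    (hasDerivWithinAt_iff_tendsto_slope' notMem_Ioi_self).mp (hd.hasDerivWithinAt (s := Ioi t))
  refine ge_of_tendsto h1 ?_
  filter_upwards [self_mem_nhdsWithin] with y hy
  have h3 := hm (mem_Ioi.2 ht) (mem_Ioi.2 (ht.trans hy)) (le_of_lt hy)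
  rw [slope_def_field]
  exact div_nonneg (by linarith) (by linarith [mem_Ioi.1 hy])

private lemma hasDerivAt_Fprim {f : ℝ → ℝ} (hc : Continuous f) (t : ℝ) :
    HasDerivAt (Fprim f) (f t) t :=
  intervalIntegral.integral_hasDerivAt_right (hc.intervalIntegrable _ _)
    (hc.stronglyMeasurableAtFilter _ _) hc.continuousAt

private lemma Fprim_continuous {f : ℝ → ℝ} (hc : Continuous f) : Continuous (Fprim f) :=
  (Differentiable.continuous (fun t => (hasDerivAt_Fprim hc t).differentiableAt))

private lemma Hpow_mono {h : ℝ → ℝ} {θ : ℝ} (hc : Continuous h) (hθ : 0 < θ)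
    (h2 : ∀ t, 0 < t → θ * Fprim h t ≤ h t * t) :
    ∀ r t : ℝ, 0 < r → r ≤ t → Fprim h r * t ^ θ ≤ Fprim h t * r ^ θ := by
  have hmono : MonotoneOn (fun s => Fprim h s / s ^ θ) (Ioi 0) := by
    have hder : ∀ s : ℝ, 0 < s → HasDerivAt (fun s => Fprim h s / s ^ θ)
        ((h s * s ^ θ - Fprim h s * (θ * s ^ (θ - 1))) / (s ^ θ) ^ 2) s := by
      intro s hs
      exact (hasDerivAt_Fprim hc s).div (Real.hasDerivAt_rpow_const (Or.inl hs.ne'))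
        (Real.rpow_pos_of_pos hs θ).ne'
    apply monotoneOn_of_deriv_nonneg (convex_Ioi 0)
    · intro s hs
      exact ((hder s hs).differentiableAt).continuousAt.continuousWithinAt
    · rw [interior_Ioi]
      intro s hs
      exact ((hder s (mem_Ioi.1 hs)).differentiableAt).differentiableWithinAt
    · rw [interior_Ioi]
      intro s hs
      rw [(hder s (mem_Ioi.1 hs)).deriv]
      apply div_nonneg _ (sq_nonneg _)
      have hs' := mem_Ioi.1 hs
      have hA : (0:ℝ) ≤ s ^ (θ - 1) := Real.rpow_nonneg hs'.le _
      have hsθ : s ^ θ = s ^ (θ - 1) * s := by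
        nth_rewrite 1 [show θ = θ - 1 + 1 by ring]
        exact Real.rpow_add_one hs'.ne' _
      rw [hsθ]
      have := h2 s hs'
      nlinarith [mul_nonneg hA (show 0 ≤ h s * s - θ * Fprim h s by linarith)]
  intro r t hr hrt
  have := hmono (mem_Ioi.2 hr) (mem_Ioi.2 (hr.trans_le hrt)) hrt
  rw [div_le_div_iff₀ (Real.rpow_pos_of_pos hr θ)
    (Real.rpow_pos_of_pos (hr.trans_le hrt) θ)] at this
  linarith

private lemma psi_nonneg {h : ℝ → ℝ} (hC1 : ContDiff ℝ 1 h)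
    (h3 : StrictMonoOn (fun t => (h t * t - 2 * Fprim h t) / t ^ 4) (Ioi 0)) :
    ∀ t : ℝ, 0 < t → 0 ≤ (deriv h t * t - h t) * t - 4 * (h t * t - 2 * Fprim h t) := by
  intro t ht
  have hh : HasDerivAt h (deriv h t) t := (hC1.differentiable one_ne_zero t).hasDerivAt
  have hnum : HasDerivAt (fun s => h s * s - 2 * Fprim h s)
      (deriv h t * t + h t * 1 - 2 * h t) t :=
    (hh.mul (hasDerivAt_id t)).sub ((hasDerivAt_Fprim hC1.continuous t).const_mul 2)
  have hden : HasDerivAt (fun s : ℝ => s ^ 4) (4 * t ^ 3) t := by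
    simpa using hasDerivAt_pow 4 t
  have hφ := hnum.div hden (pow_ne_zero 4 ht.ne')
  have hD := slope_deriv_nonneg h3.monotoneOn ht hφ
  have hN : 0 ≤ (deriv h t * t + h t * 1 - 2 * h t) * t ^ 4
      - (h t * t - 2 * Fprim h t) * (4 * t ^ 3) := by
    have h8 : (0:ℝ) < (t ^ 4) ^ 2 := by positivity
    have := mul_nonneg hD h8.le
    rwa [div_mul_cancel₀ _ (ne_of_gt h8)] at this
  have e : ((deriv h t * t - h t) * t - 4 * (h t * t - 2 * Fprim h t)) * t ^ 3
      = (deriv h t * t + h t * 1 - 2 * h t) * t ^ 4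
        - (h t * t - 2 * Fprim h t) * (4 * t ^ 3) := by ring
  exact (mul_nonneg_iff_of_pos_right (pow_pos ht 3)).mp (e ▸ hN)


noncomputable def gf (R α₀ τ δ : ℝ) (t : ℝ) : ℝ :=
  if t ≤ R then Real.exp (α₀ * t ^ τ) else Real.exp (α₀ * R ^ (τ - δ) * t ^ δ)

noncomputable def G1f (α₀ τ : ℝ) (r : ℝ) : ℝ := α₀ * τ * r ^ (τ - 1) * Real.exp (α₀ * r ^ τ)
noncomputable def G2f (R α₀ τ δ : ℝ) (r : ℝ) : ℝ :=
  α₀ * R ^ (τ - δ) * δ * r ^ (δ - 1) * Real.exp (α₀ * R ^ (τ - δ) * r ^ δ)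

section
variable {R α₀ τ δ : ℝ}

private lemma gf_boundary (hR : 0 < R) : R ^ (τ - δ) * R ^ δ = R ^ τ := by
  rw [← Real.rpow_add hR]; ring_nf

private lemma gf_cont (hR : 0 < R) (hτ : 2 ≤ τ) (hδ : 0 < δ) : Continuous (gf R α₀ τ δ) := by
  apply Continuous.if_le
  · exact Real.continuous_exp.comp (continuous_const.mul (Real.continuous_rpow_const (by linarith)))
  · exact Real.continuous_exp.comp (continuous_const.mul (Real.continuous_rpow_const hδ.le))
  · exact continuous_id
  · exact continuous_const
  · intro x hx; subst hx; rw [mul_assoc, gf_boundary hR]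

private lemma gf_pos' (t : ℝ) : 0 < gf R α₀ τ δ t := by
  unfold gf; split <;> exact Real.exp_pos _

private lemma gf_deriv1 {t : ℝ} (ht : 0 < t) (htR : t < R) :
    HasDerivAt (gf R α₀ τ δ) (G1f α₀ τ t) t := by
  have e : gf R α₀ τ δ =ᶠ[nhds t] fun s => Real.exp (α₀ * s ^ τ) := by
    filter_upwards [Iio_mem_nhds htR] with x hx
    exact if_pos (le_of_lt hx)
  have d : HasDerivAt (fun s : ℝ => Real.exp (α₀ * s ^ τ))
      (Real.exp (α₀ * t ^ τ) * (α₀ * (τ * t ^ (τ - 1)))) t :=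
    (((Real.hasDerivAt_rpow_const (Or.inl ht.ne')).const_mul α₀)).exp
  refine (d.congr_of_eventuallyEq e).congr_deriv ?_
  unfold G1f; ring

private lemma gf_deriv2 {t : ℝ} (hR : 0 < R) (htR : R < t) :
    HasDerivAt (gf R α₀ τ δ) (G2f R α₀ τ δ t) t := by
  have e : gf R α₀ τ δ =ᶠ[nhds t] fun s => Real.exp (α₀ * R ^ (τ - δ) * s ^ δ) := by
    filter_upwards [Ioi_mem_nhds htR] with x hx
    exact if_neg (not_le.mpr hx)
  have d : HasDerivAt (fun s : ℝ => Real.exp (α₀ * R ^ (τ - δ) * s ^ δ))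
      (Real.exp (α₀ * R ^ (τ - δ) * t ^ δ) * (α₀ * R ^ (τ - δ) * (δ * t ^ (δ - 1)))) t :=
    (((Real.hasDerivAt_rpow_const (Or.inl (hR.trans htR).ne')).const_mul
      (α₀ * R ^ (τ - δ)))).exp
  refine (d.congr_of_eventuallyEq e).congr_deriv ?_
  unfold G2f; ring

private lemma gf_mono (hR : 0 < R) (hα : 0 < α₀) (hτ : 0 < τ) (hδ : 0 < δ) :
    MonotoneOn (gf R α₀ τ δ) (Ici 0) := by
  intro x hx y hy hxy
  simp only [mem_Ici] at hx hy
  unfold gf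
  have hP : (0:ℝ) ≤ R ^ (τ - δ) := Real.rpow_nonneg hR.le _
  split_ifs with h1 h2 h2
  · exact Real.exp_le_exp.mpr (mul_le_mul_of_nonneg_left (Real.rpow_le_rpow hx hxy hτ.le) hα.le)
  · -- x ≤ R < y
    apply Real.exp_le_exp.mpr
    calc α₀ * x ^ τ ≤ α₀ * R ^ τ :=
          mul_le_mul_of_nonneg_left (Real.rpow_le_rpow hx h1 hτ.le) hα.le
      _ = α₀ * R ^ (τ - δ) * R ^ δ := by rw [mul_assoc, gf_boundary hR]
      _ ≤ α₀ * R ^ (τ - δ) * y ^ δ := by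
          apply mul_le_mul_of_nonneg_left (Real.rpow_le_rpow hR.le (le_of_not_ge h2) hδ.le)
          positivity
  · exact absurd (hxy.trans h2) h1
  · apply Real.exp_le_exp.mpr
    apply mul_le_mul_of_nonneg_left (Real.rpow_le_rpow hx hxy hδ.le)
    positivity
end

private lemma G1f_cont {α₀ τ : ℝ} (hτ : 2 ≤ τ) : Continuous (G1f α₀ τ) := by
  unfold G1f
  exact (continuous_const.mul (Real.continuous_rpow_const (by linarith))).mul
    (Real.continuous_exp.comp (continuous_const.mul (Real.continuous_rpow_const (by linarith))))

private lemma parts1 {h : ℝ → ℝ} {R α₀ τ δ : ℝ} (hc : Continuous h) (hR : 0 < R)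
    (hτ : 2 ≤ τ) (hδ : 0 < δ) {t : ℝ} (ht : 0 < t) (htR : t ≤ R) :
    Fprim (fun s => h s * gf R α₀ τ δ s) t
      = Fprim h t * gf R α₀ τ δ t - ∫ r in (0:ℝ)..t, Fprim h r * G1f α₀ τ r := by
  have hHc : Continuous (Fprim h) := Fprim_continuous hc
  have hgc : Continuous (gf R α₀ τ δ) := gf_cont hR hτ hδ
  have hG1c : Continuous (G1f α₀ τ) := G1f_cont hτ
  have key := intervalIntegral.integral_eq_sub_of_hasDerivAt_of_le
    (f := fun s => Fprim h s * gf R α₀ τ δ s)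
    (f' := fun r => h r * gf R α₀ τ δ r + Fprim h r * G1f α₀ τ r) ht.le
    ((hHc.mul hgc).continuousOn)
    (fun x hx => (hasDerivAt_Fprim hc x).mul (gf_deriv1 hx.1 (lt_of_lt_of_le hx.2 htR)))
    (((hc.mul hgc).add (hHc.mul hG1c)).intervalIntegrable _ _)
  rw [intervalIntegral.integral_add (f := fun r => h r * gf R α₀ τ δ r)
    (g := fun r => Fprim h r * G1f α₀ τ r) ((hc.mul hgc).intervalIntegrable _ _)
    ((hHc.mul hG1c).intervalIntegrable _ _)] at key
  have hF0 : Fprim h 0 = 0 := intervalIntegral.integral_same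
  have : Fprim (fun s => h s * gf R α₀ τ δ s) t = ∫ r in (0:ℝ)..t, h r * gf R α₀ τ δ r := rfl
  rw [this]
  rw [hF0] at key
  linarith

private lemma G2f_contOn {R α₀ τ δ : ℝ} (hR : 0 < R) {t : ℝ} :
    ContinuousOn (G2f R α₀ τ δ) (Icc R t) := by
  intro r hr
  have hr0 : r ≠ 0 := (lt_of_lt_of_le hR hr.1).ne'
  apply ContinuousAt.continuousWithinAt
  unfold G2f
  exact (continuousAt_const.mul (Real.continuousAt_rpow_const r _ (Or.inl hr0))).mul
    (Real.continuous_exp.continuousAt.comp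
      (continuousAt_const.mul (Real.continuousAt_rpow_const r _ (Or.inl hr0))))

private lemma parts2 {h : ℝ → ℝ} {R α₀ τ δ : ℝ} (hc : Continuous h) (hR : 0 < R)
    (hτ : 2 ≤ τ) (hδ : 0 < δ) {t : ℝ} (htR : R < t) :
    Fprim (fun s => h s * gf R α₀ τ δ s) t
      = Fprim h t * gf R α₀ τ δ t - (∫ r in (0:ℝ)..R, Fprim h r * G1f α₀ τ r)
        - ∫ r in R..t, Fprim h r * G2f R α₀ τ δ r := by
  have hHc : Continuous (Fprim h) := Fprim_continuous hc
  have hgc : Continuous (gf R α₀ τ δ) := gf_cont hR hτ hδ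
  have hG2c : ContinuousOn (G2f R α₀ τ δ) (Icc R t) := G2f_contOn hR
  have hG2i : IntervalIntegrable (fun r => Fprim h r * G2f R α₀ τ δ r) volume R t := by
    apply ContinuousOn.intervalIntegrable
    rw [uIcc_of_le htR.le]
    exact hHc.continuousOn.mul hG2c
  have hpR := parts1 (R := R) (α₀ := α₀) (δ := δ) hc hR hτ hδ hR le_rfl
  have key := intervalIntegral.integral_eq_sub_of_hasDerivAt_of_le
    (f := fun s => Fprim h s * gf R α₀ τ δ s)
    (f' := fun r => h r * gf R α₀ τ δ r + Fprim h r * G2f R α₀ τ δ r) htR.le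
    ((hHc.mul hgc).continuousOn)
    (fun x hx => (hasDerivAt_Fprim hc x).mul (gf_deriv2 hR hx.1))
    ?_
  swap
  · apply ContinuousOn.intervalIntegrable
    rw [uIcc_of_le htR.le]
    exact ((hc.mul hgc).continuousOn.add (hHc.continuousOn.mul hG2c))
  rw [intervalIntegral.integral_add (f := fun r => h r * gf R α₀ τ δ r)
    (((hc.mul hgc)).intervalIntegrable _ _) hG2i] at key
  have hsplit : Fprim (fun s => h s * gf R α₀ τ δ s) t
      = Fprim (fun s => h s * gf R α₀ τ δ s) R + ∫ r in R..t, h r * gf R α₀ τ δ r := by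
    rw [Fprim, Fprim]
    rw [← intervalIntegral.integral_add_adjacent_intervals (f := fun r => h r * gf R α₀ τ δ r)
      ((hc.mul hgc).intervalIntegrable 0 R) ((hc.mul hgc).intervalIntegrable R t)]
  rw [hsplit, hpR]
  linarith

private lemma bound1 {h : ℝ → ℝ} {θ α₀ τ t b : ℝ} (hc : Continuous h)
    (hθ : 0 < θ) (hα : 0 < α₀) (hτ : 2 ≤ τ) (ht : 0 < t) (hb : 0 < b) (hbt : b ≤ t)
    (hkey : ∀ r t' : ℝ, 0 < r → r ≤ t' → Fprim h r * t' ^ θ ≤ Fprim h t' * r ^ θ)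
    (hHnn : ∀ s, 0 ≤ Fprim h s) :
    ∫ r in (0:ℝ)..b, Fprim h r * G1f α₀ τ r ≤
      Fprim h t / t ^ θ * (α₀ * τ * Real.exp (α₀ * b ^ τ)) * (b ^ (θ + τ) / (θ + τ)) := by
  have hHc : Continuous (Fprim h) := Fprim_continuous hc
  have htθ : (0:ℝ) < t ^ θ := Real.rpow_pos_of_pos ht θ
  set C : ℝ := Fprim h t / t ^ θ * (α₀ * τ * Real.exp (α₀ * b ^ τ)) with hC
  have hCnn : 0 ≤ C :=
    mul_nonneg (div_nonneg (hHnn t) htθ.le) (by positivity)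
  have step1 : ∫ r in (0:ℝ)..b, Fprim h r * G1f α₀ τ r
      ≤ ∫ r in (0:ℝ)..b, C * r ^ (θ + τ - 1) := by
    apply intervalIntegral.integral_mono_on hb.le
      ((hHc.mul (G1f_cont hτ)).intervalIntegrable _ _)
      ((continuous_const.mul (Real.continuous_rpow_const (by linarith))).intervalIntegrable _ _)
    intro r hr
    rcases eq_or_lt_of_le hr.1 with h0 | hr0
    · rw [← h0]
      have : Fprim h 0 = 0 := intervalIntegral.integral_same
      simp only [Pi.mul_apply]
      rw [this, zero_mul]
      exact mul_nonneg hCnn (Real.rpow_nonneg le_rfl _)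
    · -- 0 < r ≤ b
      have hrt : r ≤ t := hr.2.trans hbt
      have hHr : Fprim h r ≤ Fprim h t * r ^ θ / t ^ θ := by
        rw [le_div_iff₀ htθ]
        exact hkey r t hr0 hrt
      have hG1 : G1f α₀ τ r ≤ α₀ * τ * r ^ (τ - 1) * Real.exp (α₀ * b ^ τ) := by
        unfold G1f
        apply mul_le_mul_of_nonneg_left _ (by positivity)
        exact Real.exp_le_exp.mpr (mul_le_mul_of_nonneg_left
          (Real.rpow_le_rpow hr0.le hr.2 (by linarith)) hα.le)
      have hG1nn : 0 ≤ G1f α₀ τ r := by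
        unfold G1f
        have h1 : (0:ℝ) ≤ r ^ (τ - 1) := Real.rpow_nonneg hr0.le _
        exact mul_nonneg (mul_nonneg (mul_nonneg hα.le (by linarith)) h1) (Real.exp_pos _).le
      calc Fprim h r * G1f α₀ τ r
          ≤ (Fprim h t * r ^ θ / t ^ θ) * (α₀ * τ * r ^ (τ - 1) * Real.exp (α₀ * b ^ τ)) := by
            apply mul_le_mul hHr hG1 hG1nn
            exact div_nonneg (mul_nonneg (hHnn t) (Real.rpow_nonneg hr0.le _)) htθ.le
        _ = C * r ^ (θ + τ - 1) := by
            rw [hC, show θ + τ - 1 = θ + (τ - 1) by ring, Real.rpow_add hr0]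
            field_simp
  have step2 : ∫ r in (0:ℝ)..b, C * r ^ (θ + τ - 1) = C * (b ^ (θ + τ) / (θ + τ)) := by
    rw [intervalIntegral.integral_const_mul]
    rw [integral_rpow (Or.inl (by linarith))]
    rw [Real.zero_rpow (by intro hh; nlinarith), show θ + τ - 1 + 1 = θ + τ by ring]
    ring
  rw [step2] at step1
  rw [hC] at step1 ⊢
  linarith

private lemma bound2 {h : ℝ → ℝ} {θ R α₀ τ δ t : ℝ} (hc : Continuous h)
    (hθ : 4 < θ) (hα : 0 < α₀) (hτ : 2 ≤ τ) (hδ : 0 < δ) (hR : 0 < R) (htR : R < t)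
    (hkey : ∀ r t' : ℝ, 0 < r → r ≤ t' → Fprim h r * t' ^ θ ≤ Fprim h t' * r ^ θ)
    (hHnn : ∀ s, 0 ≤ Fprim h s) :
    ∫ r in R..t, Fprim h r * G2f R α₀ τ δ r ≤
      Fprim h t / t ^ θ * (α₀ * R ^ (τ - δ) * δ * Real.exp (α₀ * R ^ (τ - δ) * t ^ δ))
        * ((t ^ (θ + δ) - R ^ (θ + δ)) / (θ + δ)) := by
  have hHc : Continuous (Fprim h) := Fprim_continuous hc
  have ht : (0:ℝ) < t := hR.trans htR
  have htθ : (0:ℝ) < t ^ θ := Real.rpow_pos_of_pos ht θ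
  have hP : (0:ℝ) < R ^ (τ - δ) := Real.rpow_pos_of_pos hR _
  set C : ℝ := Fprim h t / t ^ θ * (α₀ * R ^ (τ - δ) * δ * Real.exp (α₀ * R ^ (τ - δ) * t ^ δ))
    with hC
  have hCnn : 0 ≤ C :=
    mul_nonneg (div_nonneg (hHnn t) htθ.le) (by positivity)
  have hrc : ContinuousOn (fun r : ℝ => C * r ^ (θ + δ - 1)) (Icc R t) := by
    intro r hr
    have hr0 : r ≠ 0 := (hR.trans_le hr.1).ne'
    exact (continuousAt_const.mul (Real.continuousAt_rpow_const r _ (Or.inl hr0))).continuousWithinAt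
  have step1 : ∫ r in R..t, Fprim h r * G2f R α₀ τ δ r
      ≤ ∫ r in R..t, C * r ^ (θ + δ - 1) := by
    apply intervalIntegral.integral_mono_on htR.le
    · apply ContinuousOn.intervalIntegrable
      rw [uIcc_of_le htR.le]
      exact hHc.continuousOn.mul (G2f_contOn hR)
    · apply ContinuousOn.intervalIntegrable
      rw [uIcc_of_le htR.le]
      exact hrc
    intro r hr
    have hr0 : (0:ℝ) < r := hR.trans_le hr.1
    have hHr : Fprim h r ≤ Fprim h t * r ^ θ / t ^ θ := by
      rw [le_div_iff₀ htθ]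
      exact hkey r t hr0 hr.2
    have hδ1 : (0:ℝ) ≤ r ^ (δ - 1) := Real.rpow_nonneg hr0.le _
    have hG2 : G2f R α₀ τ δ r
        ≤ α₀ * R ^ (τ - δ) * δ * r ^ (δ - 1) * Real.exp (α₀ * R ^ (τ - δ) * t ^ δ) := by
      unfold G2f
      apply mul_le_mul_of_nonneg_left _ (by positivity)
      exact Real.exp_le_exp.mpr (mul_le_mul_of_nonneg_left
        (Real.rpow_le_rpow hr0.le hr.2 hδ.le) (by positivity))
    have hG2nn : 0 ≤ G2f R α₀ τ δ r := by
      unfold G2f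
      exact mul_nonneg (by positivity) (Real.exp_pos _).le
    calc Fprim h r * G2f R α₀ τ δ r
        ≤ (Fprim h t * r ^ θ / t ^ θ)
            * (α₀ * R ^ (τ - δ) * δ * r ^ (δ - 1) * Real.exp (α₀ * R ^ (τ - δ) * t ^ δ)) := by
          apply mul_le_mul hHr hG2 hG2nn
          exact div_nonneg (mul_nonneg (hHnn t) (Real.rpow_nonneg hr0.le _)) htθ.le
      _ = C * r ^ (θ + δ - 1) := by
          rw [hC, show θ + δ - 1 = θ + (δ - 1) by ring, Real.rpow_add hr0]
          field_simp
  have step2 : ∫ r in R..t, C * r ^ (θ + δ - 1) = C * ((t ^ (θ + δ) - R ^ (θ + δ)) / (θ + δ)) := by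
    rw [intervalIntegral.integral_const_mul]
    rw [integral_rpow (Or.inl (by linarith))]
    rw [show θ + δ - 1 + 1 = θ + δ by ring]
  rw [step2] at step1
  rw [hC] at step1 ⊢
  linarith

private lemma phi_step {h g F : ℝ → ℝ} {t dh dg : ℝ} (ht : 0 < t)
    (hhd : HasDerivAt h dh t) (hgd : HasDerivAt g dg t)
    (hFd : HasDerivAt F (h t * g t) t)
    (hX : 0 ≤ (dh * g t + h t * dg) * t ^ 2 - 5 * (h t * g t * t) + 8 * F t) :
    0 ≤ deriv (fun s => (h s * g s * s - 2 * F s) / s ^ 4) t ∧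
      DifferentiableAt ℝ (fun s => (h s * g s * s - 2 * F s) / s ^ 4) t := by
  have hD : HasDerivAt (fun s => (h s * g s * s - 2 * F s) / s ^ 4)
      ((((dh * g t + h t * dg) * t + h t * g t * 1 - 2 * (h t * g t)) * t ^ 4
        - (h t * g t * t - 2 * F t) * (4 * t ^ 3)) / ((t ^ 4) ^ 2)) t := by
    refine HasDerivAt.div ?_ (by simpa using hasDerivAt_pow 4 t) (pow_ne_zero 4 ht.ne')
    exact ((hhd.mul hgd).mul (hasDerivAt_id t)).sub (hFd.const_mul 2)
  refine ⟨?_, hD.differentiableAt⟩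
  rw [hD.deriv]
  apply div_nonneg _ (by positivity)
  have e : ((dh * g t + h t * dg) * t + h t * g t * 1 - 2 * (h t * g t)) * t ^ 4
      - (h t * g t * t - 2 * F t) * (4 * t ^ 3)
      = ((dh * g t + h t * dg) * t ^ 2 - 5 * (h t * g t * t) + 8 * F t) * t ^ 3 := by ring
  rw [e]
  exact mul_nonneg hX (by positivity)


set_option maxHeartbeats 1000000 in
/-- monotonicity of `t ↦ (f^{R,δ̄}(t)t − 2F^{R,δ̄}(t))/t⁴` on `(0,∞)`. -/
theorem statement18 (h : ℝ → ℝ) (θ γ M δ R α₀ τ δb : ℝ)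
    (hC1 : ContDiff ℝ 1 h) (hzero : ∀ t ≤ (0:ℝ), h t = 0)
    (hθ : 4 < θ)
    (h2 : ∀ t > (0:ℝ), 0 < θ * Fprim h t ∧ θ * Fprim h t ≤ h t * t)
    (h3 : StrictMonoOn (fun t => (h t * t - 2 * Fprim h t) / t ^ 4) (Ioi 0))
    (hδ : δ ∈ Ico (8 / θ) 2) (hγ : 0 < γ) (hM : 0 < M)
    (h4 : ∀ t : ℝ, |h t| ≤ M * Real.exp (γ * Real.rpow |t| δ))
    (hR : 0 < R) (hα : 0 < α₀) (hτ : 2 ≤ τ)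
    (hδb1 : 8 / θ ≤ δb) (hδb2 : δb ≤ 2) (hδbτ : δb ≤ τ) :
    MonotoneOn
      (fun t => (fR h R α₀ τ δb t * t - 2 * Fprim (fR h R α₀ τ δb) t) / t ^ 4)
      (Ioi 0) := by
  have hθ0 : (0:ℝ) < θ := by linarith
  have hδb0 : 0 < δb := lt_of_lt_of_le (by positivity) hδb1
  have hθδb : 8 ≤ θ * δb := by
    have := (div_le_iff₀ hθ0).mp hδb1
    linarith [this]
  have hhc : Continuous h := hC1.continuous
  have hfg : fR h R α₀ τ δb = fun t => h t * gf R α₀ τ δb t := by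
    funext t
    unfold fR gf
    rcases le_or_gt t 0 with h0 | h0
    · rw [if_pos h0, hzero t h0, zero_mul]
    · rw [if_neg (not_le.mpr h0)]
      split_ifs <;> rfl
  rw [hfg]
  show MonotoneOn
    (fun t => (h t * gf R α₀ τ δb t * t
      - 2 * Fprim (fun t => h t * gf R α₀ τ δb t) t) / t ^ 4) (Ioi 0)
  have hgc : Continuous (gf R α₀ τ δb) := gf_cont hR hτ hδb0
  have hfc : Continuous (fun t => h t * gf R α₀ τ δb t) := hhc.mul hgc
  have hFc : Continuous (Fprim (fun t => h t * gf R α₀ τ δb t)) := Fprim_continuous hfc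
  have hHnn : ∀ s : ℝ, 0 ≤ Fprim h s := by
    intro s
    rcases le_or_gt s 0 with hs | hs
    · have hzz : Fprim h s = ∫ _ in (0:ℝ)..s, (0:ℝ) := by
        apply intervalIntegral.integral_congr
        intro x hx
        rcases mem_uIcc.mp hx with ⟨_, h2'⟩ | ⟨_, h2'⟩ <;> exact hzero x (by linarith)
      rw [hzz, intervalIntegral.integral_zero]
    · nlinarith [(h2 s hs).1]
  have hH2 : ∀ s : ℝ, 0 < s → θ * Fprim h s ≤ h s * s := fun s hs => (h2 s hs).2
  have hkey := Hpow_mono hhc hθ0 hH2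
  have hK0 := psi_nonneg hC1 h3
  set φ : ℝ → ℝ := fun t => (h t * gf R α₀ τ δb t * t
      - 2 * Fprim (fun t => h t * gf R α₀ τ δb t) t) / t ^ 4 with hφdef
  -- Case 1 : points in (0, R)
  have case1 : ∀ x ∈ Ioo (0:ℝ) R, 0 ≤ deriv φ x ∧ DifferentiableAt ℝ φ x := by
    intro x hx
    have hx0 : (0:ℝ) < x := hx.1
    have hhd : HasDerivAt h (deriv h x) x := (hC1.differentiable one_ne_zero x).hasDerivAt
    have hgd := gf_deriv1 (R := R) (α₀ := α₀) (τ := τ) (δ := δb) hx0 hx.2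
    have hFd : HasDerivAt (Fprim (fun t => h t * gf R α₀ τ δb t))
        (h x * gf R α₀ τ δb x) x := hasDerivAt_Fprim hfc x
    apply phi_step hx0 hhd hgd hFd
    have hparts := parts1 (α₀ := α₀) hhc hR hτ hδb0 hx0 hx.2.le
    set I : ℝ := ∫ r in (0:ℝ)..x, Fprim h r * G1f α₀ τ r with hI
    have hb1 := bound1 (t := x) (b := x) hhc hθ0 hα hτ hx0 hx0 le_rfl hkey hHnn
    have h8 : 8 * I ≤ h x * G1f α₀ τ x * x ^ 2 := by
      set E : ℝ := Real.exp (α₀ * x ^ τ) with hE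
      have hEpos : (0:ℝ) < E := Real.exp_pos _
      have hxθ : (0:ℝ) < x ^ θ := Real.rpow_pos_of_pos hx0 θ
      have hxτ1 : (0:ℝ) ≤ x ^ (τ - 1) := Real.rpow_nonneg hx0.le _
      have hA : x ^ τ = x ^ (τ - 1) * x := by
        nth_rewrite 1 [show τ = τ - 1 + 1 by ring]
        exact Real.rpow_add_one hx0.ne' _
      have hB : x ^ (θ + τ) = x ^ θ * x ^ τ := Real.rpow_add hx0 θ τ
      have hr8 : 8 * Fprim h x ≤ (θ + τ) * (h x * x) := by
        have h5 := hH2 x hx0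
        nlinarith [hHnn x, mul_le_mul_of_nonneg_left h5 (show (0:ℝ) ≤ θ + τ by linarith),
          mul_nonneg (show (0:ℝ) ≤ (θ + τ) * θ - 8 by nlinarith) (hHnn x)]
      have hθτ : (0:ℝ) < θ + τ := by linarith
      calc 8 * I ≤ 8 * (Fprim h x / x ^ θ * (α₀ * τ * E) * (x ^ (θ + τ) / (θ + τ))) := by
            linarith
        _ = (8 * Fprim h x) * (α₀ * τ * E * x ^ (τ - 1) * x) / (θ + τ) := by
            rw [hB, hA]
            field_simp
        _ ≤ ((θ + τ) * (h x * x)) * (α₀ * τ * E * x ^ (τ - 1) * x) / (θ + τ) := by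
            refine (div_le_div_iff_of_pos_right hθτ).mpr (mul_le_mul_of_nonneg_right hr8 ?_)
            positivity
        _ = h x * G1f α₀ τ x * x ^ 2 := by
            unfold G1f
            rw [← hE]
            field_simp
    have hKx := hK0 x hx0
    have hgpos := gf_pos' (R := R) (α₀ := α₀) (τ := τ) (δ := δb) x
    show 0 ≤ (deriv h x * gf R α₀ τ δb x + h x * G1f α₀ τ x) * x ^ 2
        - 5 * (h x * gf R α₀ τ δb x * x)
        + 8 * Fprim (fun t => h t * gf R α₀ τ δb t) x
    have eX : (deriv h x * gf R α₀ τ δb x + h x * G1f α₀ τ x) * x ^ 2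
        - 5 * (h x * gf R α₀ τ δb x * x)
        + 8 * Fprim (fun t => h t * gf R α₀ τ δb t) x
        = gf R α₀ τ δb x * ((deriv h x * x - h x) * x - 4 * (h x * x - 2 * Fprim h x))
          + (h x * G1f α₀ τ x * x ^ 2 - 8 * I) := by
      rw [hparts]; ring
    rw [eX]
    have := mul_nonneg hgpos.le hKx
    linarith
  -- Case 2 : points in (R, ∞)
  have case2 : ∀ x ∈ Ioi R, 0 ≤ deriv φ x ∧ DifferentiableAt ℝ φ x := by
    intro x hxR
    rw [mem_Ioi] at hxR
    have hx0 : (0:ℝ) < x := hR.trans hxR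
    have hhd : HasDerivAt h (deriv h x) x := (hC1.differentiable one_ne_zero x).hasDerivAt
    have hgd := gf_deriv2 (α₀ := α₀) (τ := τ) (δ := δb) hR hxR
    have hFd : HasDerivAt (Fprim (fun t => h t * gf R α₀ τ δb t))
        (h x * gf R α₀ τ δb x) x := hasDerivAt_Fprim hfc x
    apply phi_step hx0 hhd hgd hFd
    have hparts := parts2 (α₀ := α₀) hhc hR hτ hδb0 hxR
    set I1 : ℝ := ∫ r in (0:ℝ)..R, Fprim h r * G1f α₀ τ r with hI1
    set I2 : ℝ := ∫ r in R..x, Fprim h r * G2f R α₀ τ δb r with hI2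
    have hb1 := bound1 (t := x) (b := R) hhc hθ0 hα hτ hx0 hR hxR.le hkey hHnn
    have hb2 := bound2 (t := x) hhc hθ hα hτ hδb0 hR hxR hkey hHnn
    have h8 : 8 * (I1 + I2) ≤ h x * G2f R α₀ τ δb x * x ^ 2 := by
      set P : ℝ := R ^ (τ - δb) with hP
      have hPpos : (0:ℝ) < P := Real.rpow_pos_of_pos hR _
      set E2 : ℝ := Real.exp (α₀ * P * x ^ δb) with hE2
      set gR : ℝ := Real.exp (α₀ * R ^ τ) with hgR
      have hE2pos : (0:ℝ) < E2 := Real.exp_pos _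
      have hgRpos : (0:ℝ) < gR := Real.exp_pos _
      set Y : ℝ := R ^ (θ + δb) with hY
      set X1 : ℝ := x ^ (θ + δb) with hX1
      have hYpos : (0:ℝ) < Y := Real.rpow_pos_of_pos hR _
      have hX1pos : (0:ℝ) < X1 := Real.rpow_pos_of_pos hx0 _
      have hYX : Y ≤ X1 := Real.rpow_le_rpow hR.le hxR.le (by linarith)
      have hxθ : (0:ℝ) < x ^ θ := Real.rpow_pos_of_pos hx0 θ
      have hxδ1 : (0:ℝ) ≤ x ^ (δb - 1) := Real.rpow_nonneg hx0.le _
      have hPY : R ^ (θ + τ) = P * Y := by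
        rw [hP, hY, ← Real.rpow_add hR]; ring_nf
      have hX1eq : X1 = x ^ θ * x ^ δb := Real.rpow_add hx0 θ δb
      have hxδeq : x ^ δb = x ^ (δb - 1) * x := by
        nth_rewrite 1 [show δb = δb - 1 + 1 by ring]
        exact Real.rpow_add_one hx0.ne' _
      have hgRE : gR ≤ E2 := by
        rw [hgR, hE2]
        apply Real.exp_le_exp.mpr
        have hRτ : R ^ τ = P * R ^ δb := by rw [hP, ← Real.rpow_add hR]; ring_nf
        rw [hRτ, ← mul_assoc]
        exact mul_le_mul_of_nonneg_left (Real.rpow_le_rpow hR.le hxR.le hδb0.le)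
          (by positivity)
      have hθτ : (0:ℝ) < θ + τ := by linarith
      have hθδ : (0:ℝ) < θ + δb := by linarith
      set c : ℝ := Fprim h x * α₀ * P / x ^ θ with hc
      have hcnn : 0 ≤ c := by
        apply div_nonneg _ hxθ.le
        exact mul_nonneg (mul_nonneg (hHnn x) hα.le) hPpos.le
      have e1 : Fprim h x / x ^ θ * (α₀ * τ * gR) * (R ^ (θ + τ) / (θ + τ))
          = c * (τ * gR * Y) / (θ + τ) := by
        rw [hPY, hc]; field_simp
      have e2 : Fprim h x / x ^ θ * (α₀ * P * δb * E2) * ((X1 - Y) / (θ + δb))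
          = c * (δb * E2 * (X1 - Y)) / (θ + δb) := by
        rw [hc]; field_simp
      have core : τ * gR * Y / (θ + τ) + δb * E2 * (X1 - Y) / (θ + δb) ≤ E2 * X1 := by
        rw [div_add_div _ _ hθτ.ne' hθδ.ne', div_le_iff₀ (by positivity)]
        nlinarith [mul_nonneg (mul_nonneg (sub_nonneg.2 hgRE) hYpos.le)
            (show (0:ℝ) ≤ τ * (θ + δb) by positivity),
          mul_nonneg (mul_nonneg hE2pos.le (sub_nonneg.2 hYX))
            (show (0:ℝ) ≤ θ * (τ - δb) by nlinarith),
          mul_nonneg (mul_nonneg hE2pos.le hX1pos.le)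
            (show (0:ℝ) ≤ θ * (θ + δb) by positivity)]
      have hrhs : c * (θ * δb * E2 * X1) ≤ h x * G2f R α₀ τ δb x * x ^ 2 := by
        unfold G2f
        rw [← hP, ← hE2, hc]
        have hstep : Fprim h x * α₀ * P * (θ * δb * E2 * X1) / x ^ θ
            = (θ * Fprim h x) * (α₀ * P * δb * E2 * x ^ δb) := by
          rw [hX1eq]; field_simp
        rw [div_mul_eq_mul_div, hstep]
        have h5 := hH2 x hx0
        have : (θ * Fprim h x) * (α₀ * P * δb * E2 * x ^ δb)
            ≤ (h x * x) * (α₀ * P * δb * E2 * x ^ δb) := by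
          apply mul_le_mul_of_nonneg_right h5
          positivity
        calc (θ * Fprim h x) * (α₀ * P * δb * E2 * x ^ δb)
            ≤ (h x * x) * (α₀ * P * δb * E2 * x ^ δb) := this
          _ = h x * (α₀ * P * δb * x ^ (δb - 1) * E2) * x ^ 2 := by
              rw [hxδeq]; ring
      have hc8 : c * (8 * E2 * X1) ≤ c * (θ * δb * E2 * X1) := by
        apply mul_le_mul_of_nonneg_left _ hcnn
        have : (0:ℝ) ≤ E2 * X1 := by positivity
        nlinarith [this]
      calc 8 * (I1 + I2)
          ≤ 8 * (c * (τ * gR * Y) / (θ + τ) + c * (δb * E2 * (X1 - Y)) / (θ + δb)) := by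
            rw [← e1, ← e2]; linarith
        _ = 8 * c * (τ * gR * Y / (θ + τ) + δb * E2 * (X1 - Y) / (θ + δb)) := by ring
        _ ≤ 8 * c * (E2 * X1) := by
            apply mul_le_mul_of_nonneg_left core (by linarith)
        _ = c * (8 * E2 * X1) := by ring
        _ ≤ c * (θ * δb * E2 * X1) := hc8
        _ ≤ h x * G2f R α₀ τ δb x * x ^ 2 := hrhs
    have hKx := hK0 x hx0
    have hgpos := gf_pos' (R := R) (α₀ := α₀) (τ := τ) (δ := δb) x
    show 0 ≤ (deriv h x * gf R α₀ τ δb x + h x * G2f R α₀ τ δb x) * x ^ 2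
        - 5 * (h x * gf R α₀ τ δb x * x)
        + 8 * Fprim (fun t => h t * gf R α₀ τ δb t) x
    have eX : (deriv h x * gf R α₀ τ δb x + h x * G2f R α₀ τ δb x) * x ^ 2
        - 5 * (h x * gf R α₀ τ δb x * x)
        + 8 * Fprim (fun t => h t * gf R α₀ τ δb t) x
        = gf R α₀ τ δb x * ((deriv h x * x - h x) * x - 4 * (h x * x - 2 * Fprim h x))
          + (h x * G2f R α₀ τ δb x * x ^ 2 - 8 * (I1 + I2)) := by
      rw [hparts]; ring
    rw [eX]
    have := mul_nonneg hgpos.le hKx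
    linarith
  -- continuity of φ
  have hφcont : ∀ s : Set ℝ, (∀ x ∈ s, 0 < x) → ContinuousOn φ s := by
    intro s hs
    apply ContinuousOn.div
    · exact ((hfc.mul continuous_id).sub (continuous_const.mul hFc)).continuousOn
    · exact (continuous_pow 4).continuousOn
    · intro x hx; exact pow_ne_zero 4 (hs x hx).ne'
  have mono1 : MonotoneOn φ (Ioc 0 R) := by
    apply monotoneOn_of_deriv_nonneg (convex_Ioc 0 R) (hφcont _ (fun x hx => hx.1))
    · rw [interior_Ioc]
      exact fun x hx => (case1 x hx).2.differentiableWithinAt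
    · rw [interior_Ioc]
      exact fun x hx => (case1 x hx).1
  have mono2 : MonotoneOn φ (Ici R) := by
    apply monotoneOn_of_deriv_nonneg (convex_Ici R) (hφcont _ (fun x hx => hR.trans_le hx))
    · rw [interior_Ici]
      exact fun x hx => (case2 x hx).2.differentiableWithinAt
    · rw [interior_Ici]
      exact fun x hx => (case2 x hx).1
  intro x hx y hy hxy
  rw [mem_Ioi] at hx hy
  by_cases hyR : y ≤ R
  · exact mono1 ⟨hx, hxy.trans hyR⟩ ⟨hy, hyR⟩ hxy
  · push_neg at hyR
    by_cases hxR : x ≤ R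
    · exact le_trans (mono1 ⟨hx, hxR⟩ ⟨hR, le_rfl⟩ hxR)
        (mono2 (mem_Ici.2 le_rfl) (mem_Ici.2 hyR.le) hyR.le)
    · exact mono2 (mem_Ici.2 (le_of_not_ge hxR)) (mem_Ici.2 hyR.le) hxy
end
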